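/- arXiv:1609.03668 — 4 statements merged into one kernel-verified Lean document; each statement's English description precedes it below -/
import Mathlib

section
/- With C[i,j] the length of an LCS_{k+} of X[1..i] and Y[1..j], and match(i,j,l) = 1 if the length-l suffixes of X[1..i] and Y[1..j] are equal and 0 otherwise, for all k ≤ i ≤ m and k ≤ j ≤ n: C[i,j] = max({C[i,j-1], C[i-1,j]} ∪ {C[i-l, j-l] + l·match(i,j,l) : k ≤ l ≤ min(i,j)}), and C[i,j] = 0 if i < k or j < k. -/
/-!
Split an optimal solution for `X[0, i)`, `Y[0, j)` at its last chunk. If that chunk ends before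
position `i` of `X` (or before `j` of `Y`), the solution already lives in `X[0, i - 1)`, `Y[0, j)`
(or in `X[0, i)`, `Y[0, j - 1)`). Otherwise the chunk is a common suffix of some length `l ≥ k`,
and what precedes it is a solution for `X[0, i - l)`, `Y[0, j - l)`. Conversely, each term of the
maximum is attained: solutions for shorter prefixes remain solutions, and a matching suffix of
length `l ≥ k` can be appended as a new last chunk.
-/

variable {α : Type*} [DecidableEq α]

/-- `IsCSK k X Y L` : there is a common subsequence of `X` and `Y` of total length `L`
consisting of matching chunks each of length at least `k`, with the chunks at
non-overlapping increasing positions in both strings (0-based starting positions). -/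
def IsCSK (k : ℕ) (X Y : List α) (L : ℕ) : Prop :=
  ∃ (t : ℕ) (i j l : ℕ → ℕ),
    (∀ s < t, k ≤ l s) ∧
    (∀ s < t, i s + l s ≤ X.length) ∧
    (∀ s < t, j s + l s ≤ Y.length) ∧
    (∀ s < t, (X.drop (i s)).take (l s) = (Y.drop (j s)).take (l s)) ∧
    (∀ s, s + 1 < t → i s + l s ≤ i (s + 1) ∧ j s + l s ≤ j (s + 1)) ∧
    L = ∑ s ∈ Finset.range t, l s

/-- The length of a longest common subsequence in at least `k` length substrings. -/
noncomputable def lcsK (k : ℕ) (X Y : List α) : ℕ :=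
  sSup {L | IsCSK k X Y L}

/-- `matchF X Y i j l = 1` iff the length-`l` suffixes of `X[1..i]` and `Y[1..j]` are equal. -/
def matchF (X Y : List α) (i j l : ℕ) : ℕ :=
  if (X.take i).drop (i - l) = (Y.take j).drop (j - l) then 1 else 0

/-- `Lsuf X Y i j` : the length of the longest common suffix of `X[1..i]` and `Y[1..j]`. -/
noncomputable def Lsuf (X Y : List α) (i j : ℕ) : ℕ :=
  sSup {l | l ≤ i ∧ l ≤ j ∧ (X.take i).drop (i - l) = (Y.take j).drop (j - l)}

/-- `Mtab k X Y i j = max_{k ≤ l ≤ L[i,j]} (C[i-l, j-l] + l)` if `L[i,j] ≥ k`, else `-1`. -/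
noncomputable def Mtab (k : ℕ) (X Y : List α) (i j : ℕ) : ℤ :=
  if h : k ≤ Lsuf X Y i j then
    (Finset.Icc k (Lsuf X Y i j)).sup' (Finset.nonempty_Icc.mpr h)
      (fun l => (lcsK k (X.take (i - l)) (Y.take (j - l)) : ℤ) + l)
  else -1

section

variable {α : Type*}

theorem List.take_drop_take_of_add_le (L : List α) {a b m : ℕ} (h : a + b ≤ m) :
    ((L.take m).drop a).take b = (L.drop a).take b := by
  rw [List.drop_take, List.take_take, min_eq_left (by omega)]

theorem List.drop_take_sub (L : List α) {i l : ℕ} (h : l ≤ i) :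
    (L.take i).drop (i - l) = (L.drop (i - l)).take l := by
  rw [List.drop_take, Nat.sub_sub_self h]

theorem add_le_of_lt_of_forall_add_le_succ {t : ℕ} {a c : ℕ → ℕ}
    (h : ∀ s, s + 1 < t → a s + c s ≤ a (s + 1)) {s s' : ℕ} (hss' : s < s') (hs' : s' < t) :
    a s + c s ≤ a s' := by
  induction s', hss' using Nat.le_induction with
  | base => exact h s hs'
  | succ n hsn ih =>
    have := h n hs'
    have := ih (by omega)
    omega

theorem isCSK_zero (k : ℕ) (X Y : List α) : IsCSK k X Y 0 :=
  ⟨0, id, id, id, by simp, by simp, by simp, by simp, by simp, by simp⟩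

namespace IsCSK

variable {k L : ℕ} {X Y : List α}

theorem le_length (h : IsCSK k X Y L) : L ≤ X.length := by
  obtain ⟨t, a, b, c, -, hX, -, -, hord, rfl⟩ := h
  obtain rfl | ⟨u, rfl⟩ : t = 0 ∨ ∃ u, t = u + 1 := by cases t <;> simp
  · simp
  have sum_le_end : ∀ n < u + 1, ∑ s ∈ Finset.range (n + 1), c s ≤ a n + c n := by
    intro n
    induction n with
    | zero => simp
    | succ n ih =>
      intro hn
      have := ih (by omega)
      have := (hord n (by omega)).1
      rw [Finset.sum_range_succ]
      omega
  exact (sum_le_end u u.lt_succ_self).trans (hX u u.lt_succ_self)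

theorem snoc {p q l : ℕ} (h : IsCSK k (X.take p) (Y.take q) L) (hkl : k ≤ l)
    (hpX : p + l ≤ X.length) (hqY : q + l ≤ Y.length)
    (hchunk : (X.drop p).take l = (Y.drop q).take l) : IsCSK k X Y (L + l) := by
  obtain ⟨t, a, b, c, hl, hX, hY, heq, hord, rfl⟩ := h
  simp only [List.length_take] at hX hY
  refine ⟨t + 1, fun s => if s < t then a s else p, fun s => if s < t then b s else q,
    fun s => if s < t then c s else l, ?_, ?_, ?_, ?_, ?_, ?_⟩
  · intro s _
    dsimp only
    split_ifs with hs
    exacts [hl s hs, hkl]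
  · intro s _
    dsimp only
    split_ifs with hs
    exacts [by have := hX s hs; omega, hpX]
  · intro s _
    dsimp only
    split_ifs with hs
    exacts [by have := hY s hs; omega, hqY]
  · intro s _
    dsimp only
    split_ifs with hs
    · have := hX s hs
      have := hY s hs
      rw [← X.take_drop_take_of_add_le (m := p) (by omega),
        ← Y.take_drop_take_of_add_le (m := q) (by omega)]
      exact heq s hs
    · exact hchunk
  · intro s hs
    by_cases hs' : s + 1 < t
    · simpa [hs', show s < t by omega] using hord s hs'
    · have := hX s (by omega)
      have := hY s (by omega)
      simp only [show s < t by omega, hs', if_true, if_false]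
      omega
  · rw [Finset.sum_range_succ, if_neg t.lt_irrefl]
    congr 1
    exact Finset.sum_congr rfl fun s hs => (if_pos (Finset.mem_range.mp hs)).symm

theorem eq_zero_or_exists_snoc (h : IsCSK k X Y L) :
    L = 0 ∨ ∃ p q l L', k ≤ l ∧ p + l ≤ X.length ∧ q + l ≤ Y.length ∧
      (X.drop p).take l = (Y.drop q).take l ∧ IsCSK k (X.take p) (Y.take q) L' ∧ L = L' + l := by
  obtain ⟨t, a, b, c, hl, hX, hY, heq, hord, rfl⟩ := h
  obtain rfl | ⟨u, rfl⟩ : t = 0 ∨ ∃ u, t = u + 1 := by cases t <;> simp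
  · simp
  right
  have hu : u < u + 1 := u.lt_succ_self
  have hXu := hX u hu
  have hYu := hY u hu
  have hendX : ∀ s < u, a s + c s ≤ a u :=
    fun s hs => add_le_of_lt_of_forall_add_le_succ (fun s hs => (hord s hs).1) hs hu
  have hendY : ∀ s < u, b s + c s ≤ b u :=
    fun s hs => add_le_of_lt_of_forall_add_le_succ (fun s hs => (hord s hs).2) hs hu
  refine ⟨a u, b u, c u, ∑ s ∈ Finset.range u, c s, hl u hu, hXu, hYu, heq u hu,
    ⟨u, a, b, c, fun s hs => hl s (by omega), ?_, ?_, ?_, fun s hs => hord s (by omega), rfl⟩,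
    Finset.sum_range_succ c u⟩
  · intro s hs
    have := hendX s hs
    rw [List.length_take]
    omega
  · intro s hs
    have := hendY s hs
    rw [List.length_take]
    omega
  · intro s hs
    rw [X.take_drop_take_of_add_le (hendX s hs), Y.take_drop_take_of_add_le (hendY s hs)]
    exact heq s (by omega)

theorem snoc_take {i j p q l : ℕ} (h : IsCSK k (X.take p) (Y.take q) L) (hkl : k ≤ l)
    (hpX : p + l ≤ min i X.length) (hqY : q + l ≤ min j Y.length)
    (hchunk : (X.drop p).take l = (Y.drop q).take l) :
    IsCSK k (X.take i) (Y.take j) (L + l) := by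
  refine snoc ?_ hkl (by rw [List.length_take]; omega) (by rw [List.length_take]; omega) ?_
  · rwa [List.take_take, List.take_take, min_eq_left (by omega), min_eq_left (by omega)]
  · rwa [X.take_drop_take_of_add_le (by omega), Y.take_drop_take_of_add_le (by omega)]

theorem eq_zero_or_exists_snoc_take {i j : ℕ} (h : IsCSK k (X.take i) (Y.take j) L) :
    L = 0 ∨ ∃ p q l L', k ≤ l ∧ p + l ≤ min i X.length ∧ q + l ≤ min j Y.length ∧
      (X.drop p).take l = (Y.drop q).take l ∧ IsCSK k (X.take p) (Y.take q) L' ∧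
      L = L' + l := by
  obtain rfl | ⟨p, q, l, L', hkl, hpX, hqY, hchunk, h', rfl⟩ := h.eq_zero_or_exists_snoc
  · exact Or.inl rfl
  rw [List.length_take] at hpX hqY
  rw [List.take_take, List.take_take, min_eq_left (by omega), min_eq_left (by omega)] at h'
  rw [X.take_drop_take_of_add_le (by omega), Y.take_drop_take_of_add_le (by omega)] at hchunk
  exact Or.inr ⟨p, q, l, L', hkl, hpX, hqY, hchunk, h', rfl⟩

theorem take_mono {i j i' j' : ℕ} (h : IsCSK k (X.take i) (Y.take j) L) (hi : i ≤ i')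
    (hj : j ≤ j') : IsCSK k (X.take i') (Y.take j') L := by
  obtain rfl | ⟨p, q, l, L', hkl, hpX, hqY, hchunk, h', rfl⟩ := h.eq_zero_or_exists_snoc_take
  · exact isCSK_zero k _ _
  exact h'.snoc_take hkl (by omega) (by omega) hchunk

theorem eq_zero_of_lt {i j : ℕ} (h : IsCSK k (X.take i) (Y.take j) L) (hij : i < k ∨ j < k) :
    L = 0 := by
  obtain rfl | ⟨p, q, l, L', hkl, hpX, hqY, -⟩ := h.eq_zero_or_exists_snoc_take
  · rfl
  omega

theorem bddAbove_setOf (k : ℕ) (X Y : List α) : BddAbove {L | IsCSK k X Y L} :=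
  ⟨X.length, fun _ hL => hL.le_length⟩

theorem le_lcsK (h : IsCSK k X Y L) : L ≤ lcsK k X Y :=
  le_csSup (bddAbove_setOf k X Y) h

end IsCSK

theorem isCSK_lcsK (k : ℕ) (X Y : List α) : IsCSK k X Y (lcsK k X Y) :=
  Nat.sSup_mem ⟨0, isCSK_zero k X Y⟩ (IsCSK.bddAbove_setOf k X Y)

theorem lcsK_take_mono (k : ℕ) (X Y : List α) {i j i' j' : ℕ} (hi : i ≤ i') (hj : j ≤ j') :
    lcsK k (X.take i) (Y.take j) ≤ lcsK k (X.take i') (Y.take j') :=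
  ((isCSK_lcsK k _ _).take_mono hi hj).le_lcsK

end

theorem lcsK_take_le_recurrence (k : ℕ) (X Y : List α) (i j : ℕ) :
    lcsK k (X.take i) (Y.take j) ≤ lcsK k (X.take i) (Y.take (j - 1)) ∨
      lcsK k (X.take i) (Y.take j) ≤ lcsK k (X.take (i - 1)) (Y.take j) ∨
      ∃ l ∈ Finset.Icc k (min i j), lcsK k (X.take i) (Y.take j) ≤
        lcsK k (X.take (i - l)) (Y.take (j - l)) + l * matchF X Y i j l := by
  obtain h0 | ⟨p, q, l, L', hkl, hpX, hqY, hchunk, h', hL⟩ :=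
    (isCSK_lcsK k (X.take i) (Y.take j)).eq_zero_or_exists_snoc_take
  · exact Or.inl (h0 ▸ Nat.zero_le _)
  by_cases hi : p + l < i
  · exact Or.inr <| Or.inl <| hL ▸ (h'.snoc_take hkl (by omega) hqY hchunk).le_lcsK
  by_cases hj : q + l < j
  · exact Or.inl <| hL ▸ (h'.snoc_take hkl hpX (by omega) hchunk).le_lcsK
  obtain ⟨rfl, rfl⟩ : p = i - l ∧ q = j - l := by omega
  have hmatch : matchF X Y i j l = 1 :=
    if_pos (by rwa [X.drop_take_sub (by omega), Y.drop_take_sub (by omega)])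
  refine Or.inr <| Or.inr ⟨l, Finset.mem_Icc.mpr ⟨hkl, by omega⟩, ?_⟩
  rw [hmatch, mul_one, hL]
  exact Nat.add_le_add_right h'.le_lcsK l

theorem lcsK_take_sub_add_matchF_le {k : ℕ} {X Y : List α} {i j l : ℕ} (hkl : k ≤ l)
    (hli : l ≤ i) (hlj : l ≤ j) (hiX : i ≤ X.length) (hjY : j ≤ Y.length) :
    lcsK k (X.take (i - l)) (Y.take (j - l)) + l * matchF X Y i j l ≤
      lcsK k (X.take i) (Y.take j) := by
  unfold matchF
  split_ifs with hmatch
  · rw [X.drop_take_sub hli, Y.drop_take_sub hlj] at hmatch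
    rw [mul_one]
    exact ((isCSK_lcsK k _ _).snoc_take hkl (by omega) (by omega) hmatch).le_lcsK
  · rw [mul_zero, add_zero]
    exact lcsK_take_mono k X Y (Nat.sub_le i l) (Nat.sub_le j l)

theorem lcsK_recurrence_general (k : ℕ) (X Y : List α) :
    (∀ i j : ℕ, ∀ (hki : k ≤ i) (_ : i ≤ X.length) (hkj : k ≤ j) (_ : j ≤ Y.length),
      lcsK k (X.take i) (Y.take j) =
        max (max (lcsK k (X.take i) (Y.take (j - 1))) (lcsK k (X.take (i - 1)) (Y.take j)))
          ((Finset.Icc k (min i j)).sup' (Finset.nonempty_Icc.mpr (le_min hki hkj))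
            (fun l => lcsK k (X.take (i - l)) (Y.take (j - l)) + l * matchF X Y i j l))) ∧
    (∀ i j : ℕ, i < k ∨ j < k → lcsK k (X.take i) (Y.take j) = 0) := by
  refine ⟨fun i j hki hiX hkj hjY => le_antisymm ?_ ?_,
    fun i j hij => (isCSK_lcsK k _ _).eq_zero_of_lt hij⟩
  · rcases lcsK_take_le_recurrence k X Y i j with h | h | ⟨l, hl, h⟩
    · exact le_max_of_le_left (le_max_of_le_left h)
    · exact le_max_of_le_left (le_max_of_le_right h)
    · exact le_max_of_le_right (Finset.le_sup'_of_le _ hl h)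
  · refine max_le (max_le (lcsK_take_mono k X Y le_rfl (Nat.sub_le j 1))
      (lcsK_take_mono k X Y (Nat.sub_le i 1) le_rfl)) (Finset.sup'_le _ _ fun l hl => ?_)
    obtain ⟨hkl, hli, hlj⟩ : k ≤ l ∧ l ≤ i ∧ l ≤ j := by
      simpa only [Finset.mem_Icc, le_min_iff] using hl
    exact lcsK_take_sub_add_matchF_le hkl hli hlj hiX hjY

/-- The dynamic-programming recurrence for `C[i,j] = lcsK k X[1..i] Y[1..j]`:
for `k ≤ i ≤ m` and `k ≤ j ≤ n`,
`C[i,j] = max({C[i,j-1], C[i-1,j]} ∪ {C[i-l,j-l] + l·match(i,j,l) : k ≤ l ≤ min i j})`,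
and `C[i,j] = 0` when `i < k` or `j < k`. -/
theorem lcsK_recurrence (k : ℕ) (hk : 1 ≤ k) (X Y : List α) :
    (∀ i j : ℕ, ∀ (hki : k ≤ i) (_ : i ≤ X.length) (hkj : k ≤ j) (_ : j ≤ Y.length),
      lcsK k (X.take i) (Y.take j) =
        max (max (lcsK k (X.take i) (Y.take (j - 1))) (lcsK k (X.take (i - 1)) (Y.take j)))
          ((Finset.Icc k (min i j)).sup' (Finset.nonempty_Icc.mpr (le_min hki hkj))
            (fun l => lcsK k (X.take (i - l)) (Y.take (j - l)) + l * matchF X Y i j l))) ∧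
    (∀ i j : ℕ, i < k ∨ j < k → lcsK k (X.take i) (Y.take j) = 0) :=
  lcsK_recurrence_general k X Y
end

section
/- With L[i,j] = max{l : length-l suffixes of X[1..i] and Y[1..j] are equal}, C[i,j] the LCS_{k+} length of the prefixes, and M[i,j] = max_{k ≤ l ≤ L[i,j]} (C[i-l, j-l] + l) when L[i,j] ≥ k (and M[i,j] = -1 otherwise): if L[i,j] > k then M[i,j] = max(M[i-1,j-1] + 1, C[i-k, j-k] + k). -/
variable {α : Type*} [DecidableEq α]

/-!
A common suffix of length `l + 1` at `(i, j)` is a common suffix of length `l` at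
`(i - 1, j - 1)` followed by the matching last letters, so `L[i-1,j-1] = L[i,j] - 1` once
`L[i,j] ≥ 1`. Splitting the term `l = k` off the maximum defining `M[i,j]` and shifting
`l ↦ l + 1` in the rest turns the rest into `M[i-1,j-1] + 1`.
-/

theorem Finset.sup'_Icc_add_one_right {β : Type*} [SemilatticeSup β] {k n : ℕ} (hkn : k ≤ n)
    (f : ℕ → β) :
    (Finset.Icc k (n + 1)).sup' (Finset.nonempty_Icc.mpr (by omega)) f =
      f k ⊔ (Finset.Icc k n).sup' (Finset.nonempty_Icc.mpr hkn) (fun l => f (l + 1)) := by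
  have hshift : Finset.Icc (k + 1) (n + 1) = (Finset.Icc k n).map (addRightEmbedding 1) :=
    (Finset.map_add_right_Icc k n 1).symm
  rw [Finset.sup'_congr _ (Finset.insert_Icc_add_one_left_eq_Icc (by omega)).symm (fun _ _ => rfl),
    Finset.sup'_insert (Finset.nonempty_Icc.mpr (by omega)),
    Finset.sup'_congr _ hshift (fun _ _ => rfl), Finset.sup'_map]
  rfl

section CommonSuffix

variable {β : Type*} {X Y : List β} {i j l : ℕ}

theorem List.drop_take_sub_eq_iff (hi : l ≤ i) (hj : l ≤ j) :
    (X.take i).drop (i - l) = (Y.take j).drop (j - l) ↔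
      ∀ m < l, X[i - 1 - m]? = Y[j - 1 - m]? := by
  rw [List.ext_getElem?_iff]
  simp only [List.getElem?_drop, List.getElem?_take]
  constructor
  · intro hext m hm
    have := hext (l - 1 - m)
    rwa [if_pos (by omega), if_pos (by omega), show i - l + (l - 1 - m) = i - 1 - m by omega,
      show j - l + (l - 1 - m) = j - 1 - m by omega] at this
  · intro hsuf p
    by_cases hp : p < l
    · rw [if_pos (by omega), if_pos (by omega), show i - l + p = i - 1 - (l - 1 - p) by omega,
        show j - l + p = j - 1 - (l - 1 - p) by omega]
      exact hsuf _ (by omega)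
    · rw [if_neg (by omega), if_neg (by omega)]

theorem le_Lsuf_iff :
    l ≤ Lsuf X Y i j ↔ l ≤ i ∧ l ≤ j ∧ ∀ m < l, X[i - 1 - m]? = Y[j - 1 - m]? := by
  set S := {l | l ≤ i ∧ l ≤ j ∧ ∀ m < l, X[i - 1 - m]? = Y[j - 1 - m]?}
  have hS : Lsuf X Y i j = sSup S := by
    refine congrArg sSup (Set.ext fun l => and_congr_right fun hi => and_congr_right fun hj => ?_)
    exact List.drop_take_sub_eq_iff hi hj
  have hbdd : BddAbove S := ⟨i, fun l hl => hl.1⟩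
  rw [hS]
  refine ⟨fun hl => ?_, fun hl => le_csSup hbdd hl⟩
  obtain ⟨hi, hj, hsuf⟩ := Nat.sSup_mem ⟨0, by simp [S]⟩ hbdd
  exact ⟨hl.trans hi, hl.trans hj, fun m hm => hsuf m (by omega)⟩

theorem add_one_le_Lsuf_iff (h : 1 ≤ Lsuf X Y i j) :
    l + 1 ≤ Lsuf X Y i j ↔ l ≤ Lsuf X Y (i - 1) (j - 1) := by
  obtain ⟨hi1, hj1, hlast⟩ := le_Lsuf_iff.mp h
  simp only [le_Lsuf_iff]
  constructor
  · rintro ⟨hi, hj, hsuf⟩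
    refine ⟨by omega, by omega, fun m hm => ?_⟩
    have := hsuf (m + 1) (by omega)
    rwa [show i - 1 - (m + 1) = i - 1 - 1 - m by omega,
      show j - 1 - (m + 1) = j - 1 - 1 - m by omega] at this
  · rintro ⟨hi, hj, hsuf⟩
    refine ⟨by omega, by omega, fun m hm => ?_⟩
    rcases m with _ | m
    · exact hlast 0 one_pos
    · rw [show i - 1 - (m + 1) = i - 1 - 1 - m by omega,
        show j - 1 - (m + 1) = j - 1 - 1 - m by omega]
      exact hsuf m (by omega)

theorem Lsuf_eq_Lsuf_sub_one_add_one (h : 1 ≤ Lsuf X Y i j) :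
    Lsuf X Y i j = Lsuf X Y (i - 1) (j - 1) + 1 := by
  have hle := (add_one_le_Lsuf_iff h).mpr le_rfl
  have hge := (add_one_le_Lsuf_iff h (l := Lsuf X Y i j - 1)).mp (by omega)
  omega

end CommonSuffix

theorem Mtab_recurrence_of_lt_general (k : ℕ) (X Y : List α) (i j : ℕ) (h : k < Lsuf X Y i j) :
    Mtab k X Y i j =
      max (Mtab k X Y (i - 1) (j - 1) + 1)
        ((lcsK k (X.take (i - k)) (Y.take (j - k)) : ℤ) + k) := by
  have hL := Lsuf_eq_Lsuf_sub_one_add_one (X := X) (Y := Y) (i := i) (j := j) (by omega)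
  have hk : k ≤ Lsuf X Y (i - 1) (j - 1) := by omega
  rw [Mtab, Mtab, dif_pos h.le, dif_pos hk]
  simp only [hL]
  rw [Finset.sup'_Icc_add_one_right hk, Finset.sup'_add, max_comm]
  congr 1
  refine Finset.sup'_congr _ rfl fun l _ => ?_
  rw [Nat.sub_sub, Nat.sub_sub, Nat.add_comm 1 l, Nat.cast_add_one, add_assoc]

/-- If `L[i,j] > k` then `M[i,j] = max(M[i-1,j-1] + 1, C[i-k,j-k] + k)`. -/
theorem Mtab_recurrence_of_lt (k : ℕ) (hk : 1 ≤ k) (X Y : List α) (i j : ℕ)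
    (him : i ≤ X.length) (hjn : j ≤ Y.length) (h : k < Lsuf X Y i j) :
    Mtab k X Y i j =
      max (Mtab k X Y (i - 1) (j - 1) + 1)
        ((lcsK k (X.take (i - k)) (Y.take (j - k)) : ℤ) + k) :=
  Mtab_recurrence_of_lt_general k X Y i j h
end

section
/- For strings S₁, S₂ and indices 1 ≤ i₁ ≤ |S₁|, 1 ≤ i₂ ≤ |S₂|, the order-preserving longest common extension satisfies opLCE(i₁, i₂; S₁, S₂) = min( Z_{(S₁·S₂)[i₁..]}[|S₁| - i₁ + i₂ + 1], |S₁| - i₁ + 1 ), where Z_S[i] = max{l : S[1..l] ≈ S[i..i+l-1]} is the Z-table of S under order-isomorphism. -/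
variable {α : Type*} [LinearOrder α]

/-- Order-isomorphism of strings modeled as lists: same length, and corresponding
pairs of positions compare the same way. -/
def OIL (S T : List α) : Prop :=
  S.length = T.length ∧
    ∀ (p q : Fin S.length) (p' q' : Fin T.length),
      (p : ℕ) = (p' : ℕ) → (q : ℕ) = (q' : ℕ) →
        (S.get p ≤ S.get q ↔ T.get p' ≤ T.get q')

/-- `opLCE S₁ S₂ i₁ i₂` (1-based indices): the length of the longest
order-isomorphic extension `S₁[i₁..i₁+l-1] ≈ S₂[i₂..i₂+l-1]`. -/
noncomputable def opLCE (S₁ S₂ : List α) (i₁ i₂ : ℕ) : ℕ :=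
  sSup {l | i₁ - 1 + l ≤ S₁.length ∧ i₂ - 1 + l ≤ S₂.length ∧
    OIL ((S₁.drop (i₁ - 1)).take l) ((S₂.drop (i₂ - 1)).take l)}

/-- The `Z`-table under order-isomorphism: `Ztab S i = max {l : S[1..l] ≈ S[i..i+l-1]}`
(1-based index `i`). -/
noncomputable def Ztab (S : List α) (i : ℕ) : ℕ :=
  sSup {l | i - 1 + l ≤ S.length ∧ OIL (S.take l) ((S.drop (i - 1)).take l)}

/-! Both sides are lengths of longest order-isomorphic common prefixes: `opLCE` of `S₁[i₁..]`
and `S₂[i₂..]`, the `Z`-value of `(S₁·S₂)[i₁..] = S₁[i₁..]·S₂` against its suffix `S₂[i₂..]`.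
Order-isomorphism passes to prefixes of equal length, so the lengths of order-isomorphic common
prefixes form a down-set, and capping the second one at `|S₁[i₁..]| = |S₁| - i₁ + 1` gives the
first. -/

theorem Nat.sSup_inter_Iic {B : Set ℕ} (hB : IsLowerSet B) (hne : B.Nonempty)
    (hbdd : BddAbove B) (c : ℕ) : sSup (B ∩ Set.Iic c) = min (sSup B) c := by
  have hmem : sSup B ∈ B := Nat.sSup_mem hne hbdd
  refine IsGreatest.csSup_eq
    ⟨⟨hB (min_le_left _ _) hmem, Set.mem_Iic.2 (min_le_right _ _)⟩, ?_⟩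
  rintro l ⟨hl, hlc⟩
  exact le_min (le_csSup hbdd hl) hlc

lemma OIL_nil : OIL ([] : List α) [] := ⟨rfl, fun p _ _ _ _ _ => absurd p.2 (by simp)⟩

lemma OIL.take {S T : List α} (h : OIL S T) (l : ℕ) : OIL (S.take l) (T.take l) := by
  obtain ⟨hlen, hget⟩ := h
  refine ⟨by simp [hlen], fun p q p' q' hp hq => ?_⟩
  have := hget ⟨p, lt_of_lt_of_le p.2 (by simp)⟩ ⟨q, lt_of_lt_of_le q.2 (by simp)⟩
    ⟨p', lt_of_lt_of_le p'.2 (by simp)⟩ ⟨q', lt_of_lt_of_le q'.2 (by simp)⟩ hp hq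
  simpa [List.get_eq_getElem, List.getElem_take] using this

noncomputable def opLCP (U V : List α) : ℕ :=
  sSup {l | l ≤ U.length ∧ l ≤ V.length ∧ OIL (U.take l) (V.take l)}

lemma opLCE_eq_opLCP (S₁ S₂ : List α) {i₁ i₂ : ℕ} (h₁ : i₁ - 1 ≤ S₁.length)
    (h₂ : i₂ - 1 ≤ S₂.length) :
    opLCE S₁ S₂ i₁ i₂ = opLCP (S₁.drop (i₁ - 1)) (S₂.drop (i₂ - 1)) := by
  simp only [opLCE, opLCP, List.length_drop]
  congr 1 with l
  exact and_congr (by omega) (and_congr (by omega) Iff.rfl)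

lemma Ztab_eq_opLCP (S : List α) {i : ℕ} (h : i - 1 ≤ S.length) :
    Ztab S i = opLCP S (S.drop (i - 1)) := by
  simp only [Ztab, opLCP, List.length_drop]
  congr 1 with l
  constructor
  · rintro ⟨hl, hOIL⟩
    exact ⟨by omega, by omega, hOIL⟩
  · rintro ⟨-, hl, hOIL⟩
    exact ⟨by omega, hOIL⟩

lemma isLowerSet_opLCP (U V : List α) :
    IsLowerSet {l | l ≤ U.length ∧ l ≤ V.length ∧ OIL (U.take l) (V.take l)} := by
  rintro l k hkl ⟨hU, hV, hOIL⟩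
  refine ⟨hkl.trans hU, hkl.trans hV, ?_⟩
  simpa only [List.take_take, min_eq_left hkl] using hOIL.take k

lemma opLCP_append_left_min (U W V : List α) :
    min (opLCP (U ++ W) V) U.length = opLCP U V := by
  rw [opLCP, ← Nat.sSup_inter_Iic (isLowerSet_opLCP _ _) ⟨0, by simp [OIL_nil]⟩
    ⟨(U ++ W).length, fun l hl => hl.1⟩, opLCP]
  congr 1 with l
  simp only [Set.mem_inter_iff, Set.mem_ofPred_eq, Set.mem_Iic, List.length_append]
  constructor
  · rintro ⟨⟨-, hV, hOIL⟩, hU⟩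
    rw [List.take_append_of_le_length hU] at hOIL
    exact ⟨hU, hV, hOIL⟩
  · rintro ⟨hU, hV, hOIL⟩
    rw [← List.take_append_of_le_length (l₂ := W) hU] at hOIL
    exact ⟨⟨by omega, hV, hOIL⟩, hU⟩

/-- `opLCE(i₁,i₂;S₁,S₂) = min( Z_{(S₁·S₂)[i₁..]}[|S₁| - i₁ + i₂ + 1], |S₁| - i₁ + 1 )`. -/
theorem opLCE_eq_Ztab (S₁ S₂ : List α) :
    ∀ i₁ i₂ : ℕ, 1 ≤ i₁ → i₁ ≤ S₁.length → 1 ≤ i₂ → i₂ ≤ S₂.length →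
      opLCE S₁ S₂ i₁ i₂ =
        min (Ztab ((S₁ ++ S₂).drop (i₁ - 1)) (S₁.length - i₁ + i₂ + 1))
          (S₁.length - i₁ + 1) := by
  intro i₁ i₂ h₁ h₁' h₂ h₂'
  have hsuffix : (S₁ ++ S₂).drop (i₁ - 1) = S₁.drop (i₁ - 1) ++ S₂ :=
    List.drop_append_of_le_length (by omega)
  have hshift : (S₁.drop (i₁ - 1) ++ S₂).drop (S₁.length - i₁ + i₂ + 1 - 1)
      = S₂.drop (i₂ - 1) := by
    rw [List.drop_append, List.drop_eq_nil_of_le (by simp; omega), List.nil_append,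
      List.length_drop]
    congr 1
    omega
  rw [opLCE_eq_opLCP S₁ S₂ (by omega) (by omega), hsuffix,
    Ztab_eq_opLCP _ (by simp; omega), hshift,
    show S₁.length - i₁ + 1 = (S₁.drop (i₁ - 1)).length by simp; omega,
    opLCP_append_left_min]
end

section
/- Let H be the 2d-Min-Heap of X (parent(i) = max{j < i : X[j] < X[i]}, X[0] = -∞). For 1 ≤ i₁ ≤ i₂ ≤ n, let u = LCA(i₁, i₂) in H. If u = i₁, then i₁ is a position of a minimum of X[i₁..i₂] (taking the rightmost minimum under ties appropriately: the answer of rmq(i₁,i₂)). Otherwise, the child of u that is an ancestor of i₂ is a position achieving the minimum of X[i₁..i₂]. -/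
/-!
An ancestor `a` of `d` in the heap is a strict minimum of `X` on `(a, d]`, and every position
strictly between `parent c` and `c` holds a value at least `X c`. Consequently an ancestor `c`
of `d` is an ancestor of every position in `[c, d]`. If `u = LCA(i₁, i₂) ≠ i₁` and `c` is its
child above `i₂`, this forbids `c < i₁` (it would make `c` a common ancestor below `u`), so
`parent c = u < i₁ ≤ c ≤ i₂`, and `[i₁, i₂]` is covered by `(parent c, c) ∪ [c, i₂]`.
-/

variable {α : Type*} [LinearOrder α]

/-- The parent of node `i ≥ 1` in the 2d-Min-Heap of `X` (with `X 0 = ⊥` playing the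
role of `-∞`): the largest `j < i` with `X j < X i`. -/
noncomputable def heapParent (X : ℕ → WithBot α) (i : ℕ) : ℕ :=
  Nat.findGreatest (fun j => X j < X i) (i - 1)

/-- `HeapAnc X a d` : node `a` is a (reflexive) ancestor of node `d` in the
2d-Min-Heap of `X`, i.e. `a` is reachable from `d` by repeatedly taking parents. -/
def HeapAnc (X : ℕ → WithBot α) (a d : ℕ) : Prop :=
  Relation.ReflTransGen (fun x y => x ≠ 0 ∧ y = heapParent X x) d a

section

variable {X : ℕ → WithBot α}

lemma heapParent_le_pred (i : ℕ) : heapParent X i ≤ i - 1 :=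
  Nat.findGreatest_le _

lemma heapParent_lt {i : ℕ} (hi : i ≠ 0) : heapParent X i < i :=
  (heapParent_le_pred i).trans_lt (Nat.sub_one_lt hi)

lemma heapParent_val_lt {i : ℕ} (h : X 0 < X i) : X (heapParent X i) < X i :=
  Nat.findGreatest_spec (P := fun j => X j < X i) (Nat.zero_le _) h

lemma le_heapParent_of_val_lt {i j : ℕ} (hji : j < i) (h : X j < X i) : j ≤ heapParent X i :=
  Nat.le_findGreatest (Nat.le_sub_one_of_lt hji) h

lemma val_le_of_heapParent_lt {i t : ℕ} (ht : heapParent X i < t) (hti : t ≤ i) :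
    X i ≤ X t := by
  rcases hti.eq_or_lt with rfl | hti
  · exact le_rfl
  · exact not_lt.1 <| Nat.findGreatest_is_greatest (P := fun j => X j < X i) ht
      (Nat.le_sub_one_of_lt hti)

namespace HeapAnc

lemma le {a d : ℕ} (h : HeapAnc X a d) : a ≤ d := by
  induction h with
  | refl => exact le_rfl
  | tail _ hstep ih => exact (hstep.2 ▸ (heapParent_le_pred _).trans (Nat.sub_le _ _)).trans ih

variable (hX : ∀ i, i ≠ 0 → X 0 < X i)
include hX

lemma val_lt {a d t : ℕ} (h : HeapAnc X a d) (hat : a < t) (htd : t ≤ d) : X a < X t := by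
  induction h generalizing t with
  | refl => exact absurd (hat.trans_le htd) (lt_irrefl _)
  | @tail b c _ hstep ih =>
    obtain ⟨hb, rfl⟩ := hstep
    rcases le_or_gt t b with htb | hbt
    · exact (heapParent_val_lt (hX b hb)).trans_le (val_le_of_heapParent_lt hat htb)
    · exact (heapParent_val_lt (hX b hb)).trans (ih hbt htd)

lemma val_le {a d t : ℕ} (h : HeapAnc X a d) (hat : a ≤ t) (htd : t ≤ d) : X a ≤ X t := by
  rcases hat.eq_or_lt with rfl | hat
  · exact le_rfl
  · exact (h.val_lt hX hat htd).le

lemma of_le_of_le {c d m : ℕ} (h : HeapAnc X c d) (hcm : c ≤ m) (hmd : m ≤ d) :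
    HeapAnc X c m := by
  induction m using Nat.strong_induction_on with
  | _ m ih =>
    rcases hcm.eq_or_lt with rfl | hcm
    · exact Relation.ReflTransGen.refl
    · have hm : m ≠ 0 := Nat.ne_zero_of_lt hcm
      have hp := heapParent_lt (X := X) hm
      have hcp := le_heapParent_of_val_lt hcm (h.val_lt hX hcm hmd)
      exact Relation.ReflTransGen.head ⟨hm, rfl⟩ (ih _ hp hcp (hp.le.trans hmd))

end HeapAnc

end

theorem heap_rmq_via_lca_general (X : ℕ → WithBot α)
    (h0 : X 0 = ⊥) (hne : ∀ i : ℕ, 1 ≤ i → X i ≠ ⊥)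
    (i₁ i₂ : ℕ) (h12 : i₁ ≤ i₂)
    (u : ℕ) (hu1 : HeapAnc X u i₁) (hu2 : HeapAnc X u i₂)
    (hlca : ∀ w : ℕ, HeapAnc X w i₁ → HeapAnc X w i₂ → HeapAnc X w u) :
    (u = i₁ → ∀ t : ℕ, i₁ ≤ t → t ≤ i₂ → X i₁ ≤ X t) ∧
    (u ≠ i₁ → ∀ c : ℕ, 0 < c → heapParent X c = u → HeapAnc X c i₂ →
      i₁ ≤ c ∧ c ≤ i₂ ∧ ∀ t : ℕ, i₁ ≤ t → t ≤ i₂ → X c ≤ X t) := by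
  have hX : ∀ i, i ≠ 0 → X 0 < X i := fun i hi =>
    h0 ▸ WithBot.bot_lt_iff_ne_bot.2 (hne i (Nat.one_le_iff_ne_zero.2 hi))
  refine ⟨fun hu t ht1 ht2 => hu ▸ hu2.val_le hX (hu ▸ ht1) ht2, ?_⟩
  intro hu c hc hcu hc2
  have hui : u < i₁ := hu1.le.lt_of_ne hu
  have hic : i₁ ≤ c := by
    by_contra! hci
    have hcu' : c ≤ u := (hlca c (hc2.of_le_of_le hX hci.le h12) hc2).le
    exact absurd (hcu ▸ heapParent_lt hc.ne') (not_lt.2 hcu')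
  refine ⟨hic, hc2.le, fun t ht1 ht2 => ?_⟩
  rcases lt_or_ge t c with htc | hct
  · exact val_le_of_heapParent_lt (hcu ▸ hui.trans_le ht1) htc.le
  · exact hc2.val_le hX hct ht2

/-- RMQ via LCA in the 2d-Min-Heap: let `u` be the lowest common ancestor of
`i₁` and `i₂` (`1 ≤ i₁ ≤ i₂ ≤ n`).  If `u = i₁`, then `i₁` is a position of a
minimum of `X[i₁..i₂]`; otherwise the child `c` of `u` that is an ancestor of
`i₂` lies in `[i₁, i₂]` and is a position of a minimum of `X[i₁..i₂]`. -/
theorem heap_rmq_via_lca (X : ℕ → WithBot α) (n : ℕ)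
    (h0 : X 0 = ⊥) (hne : ∀ i : ℕ, 1 ≤ i → X i ≠ ⊥)
    (i₁ i₂ : ℕ) (hi1 : 1 ≤ i₁) (h12 : i₁ ≤ i₂) (h2n : i₂ ≤ n)
    (u : ℕ) (hu1 : HeapAnc X u i₁) (hu2 : HeapAnc X u i₂)
    (hlca : ∀ w : ℕ, HeapAnc X w i₁ → HeapAnc X w i₂ → HeapAnc X w u) :
    (u = i₁ → ∀ t : ℕ, i₁ ≤ t → t ≤ i₂ → X i₁ ≤ X t) ∧
    (u ≠ i₁ → ∀ c : ℕ, 0 < c → heapParent X c = u → HeapAnc X c i₂ →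
      i₁ ≤ c ∧ c ≤ i₂ ∧ ∀ t : ℕ, i₁ ≤ t → t ≤ i₂ → X c ≤ X t) :=
  heap_rmq_via_lca_general X h0 hne i₁ i₂ h12 u hu1 hu2 hlca
end
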